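/- arXiv:2007.07475 — 2 statements merged into one kernel-verified Lean document; each statement's English description precedes it below -/
import Mathlib

section
/- (Regular basic lifting) Let P_b be a g_b-regular (K_b, f_b, Z_b, K_b(f_b−Z_b)/g_b) PDA and P_l a g_c-regular (m, n, e, m(n−e)/g_c) PDA. Replace each ∗ of P_b by the all-∗ n×m block and each integer of P_b by an integer-disjoint copy of P_l (distinct integers of P_b getting disjoint integer sets). The result is a g_b·g_c-regular (K_b m, f_b n, Z_b n + (f_b−Z_b)e, (K_b(f_b−Z_b)/g_b)·(m(n−e)/g_c)) PDA. -/
open Finset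

/-- Number of stars (`none`) in column `k` of the array `P`. -/
def colStars {f K : ℕ} (P : Fin f → Fin K → Option ℕ) (k : Fin K) : ℕ :=
  (Finset.univ.filter fun j => P j k = none).card

/-- `P` is a `(K, f, Z, S)` placement delivery array: an `f × K` array over `{∗} ∪ S`
(`none` encodes `∗`) with exactly `Z` stars in each column, every integer of `S`
occurring at least once (and all integer entries lying in `S`), satisfying the
Blackburn property. -/
def IsPDA {f K : ℕ} (P : Fin f → Fin K → Option ℕ) (Z : ℕ) (S : Finset ℕ) : Prop :=
  (∀ k, colStars P k = Z) ∧
  (∀ s ∈ S, ∃ j k, P j k = some s) ∧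
  (∀ j k s, P j k = some s → s ∈ S) ∧
  (∀ j₁ k₁ j₂ k₂ s, (j₁, k₁) ≠ (j₂, k₂) →
    P j₁ k₁ = some s → P j₂ k₂ = some s → P j₁ k₂ = none ∧ P j₂ k₁ = none)

/-- Every integer of `S` appears exactly `g` times in the array `P`. -/
def IsRegularPDA {f K : ℕ} (P : Fin f → Fin K → Option ℕ) (S : Finset ℕ) (g : ℕ) : Prop :=
  ∀ s ∈ S, ((Finset.univ : Finset (Fin f × Fin K)).filter
    (fun jk => P jk.1 jk.2 = some s)).card = g

/-- `P₀` and `P₁` are Blackburn-compatible with respect to `Pstar`. -/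
def BBCompat {n m : ℕ} (P₀ P₁ Pstar : Fin n → Fin m → Option ℕ) : Prop :=
  ∀ i₀ j₀ i₁ j₁ s, P₀ i₀ j₀ = some s → P₁ i₁ j₁ = some s →
    Pstar i₀ j₁ = none ∧ Pstar i₁ j₀ = none

/-- `Ig n t` is the `n × n` array with the integer `t` on the main diagonal and `∗`
elsewhere. -/
def Ig (n t : ℕ) : Fin n → Fin n → Option ℕ := fun i j => if i = j then some t else none

/-- Block-row index of a global index for an array built from `a × a` grids of `b`-sized
blocks. -/
def blkIdx {a b : ℕ} (j : Fin (a * b)) : Fin a :=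
  ⟨(j : ℕ) / b, Nat.div_lt_of_lt_mul (Nat.mul_comm a b ▸ j.isLt)⟩

/-- Within-block index of a global index. -/
def inIdx {a b : ℕ} (j : Fin (a * b)) : Fin b :=
  ⟨(j : ℕ) % b, Nat.mod_lt _ (by
    rcases Nat.eq_zero_or_pos b with h | h
    · exact absurd j.isLt (by simp [h])
    · exact h)⟩

/-- Basic block lifting: every `∗` of the base array becomes an all-`∗` `n × m` block and
every integer `i` becomes the constituent array `Pc i`. -/
def blockLift {K f m n : ℕ} (Pb : Fin f → Fin K → Option ℕ)
    (Pc : ℕ → Fin n → Fin m → Option ℕ) :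
    Fin (f * n) → Fin (K * m) → Option ℕ :=
  fun j k =>
    match Pb (blkIdx j) (blkIdx k) with
    | none => none
    | some i => Pc i (inIdx j) (inIdx k)


/-!
Index the lift by pairs (block, position in the block), so that its entry at `((J, x), (K, y))`
is `(Pb J K).bind fun i => Pc i x y`. As the copies have pairwise disjoint symbol sets, an
integer `s` of the `i`-th copy occurs exactly at the positions with `Pb J K = some i` and `s` at
`(x, y)` in that copy: a product of the occurrence sets of `i` and of `s`, which gives the
regularity `g_b g_c`. The Blackburn property comes from the base array when the two blocks
differ and from the copy when they coincide. A column meets `Z_b` all-star blocks with `n` stars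
and `f_b − Z_b` copies with `e` stars each.
-/

/-- `j ↦ (blkIdx j, inIdx j)`, definitionally. -/
def blockEquiv {a b : ℕ} : Fin (a * b) ≃ Fin a × Fin b := finProdFinEquiv.symm

@[simp]
lemma blkIdx_blockEquiv_symm {a b : ℕ} (J : Fin a) (x : Fin b) :
    blkIdx (blockEquiv.symm (J, x)) = J :=
  congrArg Prod.fst (blockEquiv.apply_symm_apply (J, x))

@[simp]
lemma inIdx_blockEquiv_symm {a b : ℕ} (J : Fin a) (x : Fin b) :
    inIdx (blockEquiv.symm (J, x)) = x :=
  congrArg Prod.snd (blockEquiv.apply_symm_apply (J, x))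

lemma card_filter_fin_mul {a b : ℕ} (p : Fin (a * b) → Prop) [DecidablePred p] :
    #{j | p j} = ∑ J : Fin a, #{x : Fin b | p (blockEquiv.symm (J, x))} := by
  rw [card_equiv blockEquiv (t := {q | p (blockEquiv.symm q)}) (by simp), card_filter,
    Fintype.sum_prod_type]
  simp only [card_filter]

section IsPDA

variable {f K Z : ℕ} {P : Fin f → Fin K → Option ℕ} {S : Finset ℕ}

lemma IsPDA.mem_of_eq_some (hP : IsPDA P Z S) {j : Fin f} {k : Fin K} {s : ℕ}
    (h : P j k = some s) : s ∈ S :=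
  hP.2.2.1 j k s h

lemma IsPDA.map {φ : ℕ → ℕ} (hP : IsPDA P Z S) (hφ : Set.InjOn φ S) :
    IsPDA (fun j k => (P j k).map φ) Z (S.image φ) := by
  refine ⟨fun k => ?_, fun s hs => ?_, fun j k s h => ?_, fun j₁ k₁ j₂ k₂ s hne h₁ h₂ => ?_⟩
  · simpa only [colStars, Option.map_eq_none_iff] using hP.1 k
  · obtain ⟨t, ht, rfl⟩ := mem_image.1 hs
    obtain ⟨j, k, hjk⟩ := hP.2.1 t ht
    exact ⟨j, k, by simp [hjk]⟩
  · obtain ⟨t, ht, rfl⟩ := Option.map_eq_some_iff.1 h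
    exact mem_image_of_mem φ (hP.mem_of_eq_some ht)
  · obtain ⟨t₁, ht₁, rfl⟩ := Option.map_eq_some_iff.1 h₁
    obtain ⟨t₂, ht₂, hφt⟩ := Option.map_eq_some_iff.1 h₂
    obtain rfl := hφ (hP.mem_of_eq_some ht₂) (hP.mem_of_eq_some ht₁) hφt
    simpa [Option.map_eq_none_iff] using hP.2.2.2 j₁ k₁ j₂ k₂ t₂ hne ht₁ ht₂

lemma IsRegularPDA.map {g : ℕ} {φ : ℕ → ℕ} (hP : IsPDA P Z S) (hreg : IsRegularPDA P S g)
    (hφ : Set.InjOn φ S) : IsRegularPDA (fun j k => (P j k).map φ) (S.image φ) g := by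
  intro s hs
  obtain ⟨t, ht, rfl⟩ := mem_image.1 hs
  rw [← hreg t ht]
  congr 1
  refine filter_congr fun jk _ => ⟨fun h => ?_, fun h => by simp [h]⟩
  obtain ⟨t', ht', hφt⟩ := Option.map_eq_some_iff.1 h
  rwa [← hφ (hP.mem_of_eq_some ht') ht hφt]

end IsPDA

section BlockLift

variable {fb Kb n m Z e : ℕ} {Pb : Fin fb → Fin Kb → Option ℕ}
  {Pc : ℕ → Fin n → Fin m → Option ℕ} {Sb : Finset ℕ} {S : ℕ → Finset ℕ}

lemma blockLift_blockEquiv_symm (J : Fin fb) (x : Fin n) (K : Fin Kb) (y : Fin m) :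
    blockLift Pb Pc (blockEquiv.symm (J, x)) (blockEquiv.symm (K, y)) =
      (Pb J K).bind fun i => Pc i x y := by
  simp only [blockLift, blkIdx_blockEquiv_symm, inIdx_blockEquiv_symm]
  cases Pb J K <;> rfl

lemma colStars_blockLift (hPb : ∀ K, colStars Pb K = Z)
    (hPc : ∀ J K i, Pb J K = some i → ∀ y, colStars (Pc i) y = e) (k : Fin (Kb * m)) :
    colStars (blockLift Pb Pc) k = Z * n + (fb - Z) * e := by
  obtain ⟨⟨K, y⟩, rfl⟩ := blockEquiv.symm.surjective k
  have hblock : ∀ J, #{x | blockLift Pb Pc (blockEquiv.symm (J, x)) (blockEquiv.symm (K, y))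
      = none} = if Pb J K = none then n else e := by
    intro J
    simp only [blockLift_blockEquiv_symm]
    rcases h : Pb J K with _ | i
    · simp
    · simpa [colStars] using hPc J K i h y
  have hstars : #{J | Pb J K = none} = Z := hPb K
  have hcopies : #{J | ¬Pb J K = none} = fb - Z := by
    have := card_filter_add_card_filter_not (s := univ) fun J => Pb J K = none
    rw [hstars, card_univ, Fintype.card_fin] at this
    omega
  rw [colStars, card_filter_fin_mul, sum_congr rfl fun J _ => hblock J, sum_ite, sum_const,
    sum_const, hstars, hcopies, smul_eq_mul, smul_eq_mul]

lemma blockLift_blockEquiv_symm_eq_some_iff (hPb : IsPDA Pb Z Sb)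
    (hPc : ∀ i ∈ Sb, IsPDA (Pc i) e (S i)) (hS : (Sb : Set ℕ).PairwiseDisjoint S)
    {i s : ℕ} (hi : i ∈ Sb) (hs : s ∈ S i) (J : Fin fb) (x : Fin n) (K : Fin Kb) (y : Fin m) :
    blockLift Pb Pc (blockEquiv.symm (J, x)) (blockEquiv.symm (K, y)) = some s ↔
      Pb J K = some i ∧ Pc i x y = some s := by
  rw [blockLift_blockEquiv_symm, Option.bind_eq_some_iff]
  refine ⟨fun ⟨i', hb, hc⟩ => ?_, fun ⟨hb, hc⟩ => ⟨i, hb, hc⟩⟩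
  have hi' := hPb.mem_of_eq_some hb
  obtain rfl := hS.elim_finset hi' hi s ((hPc i' hi').mem_of_eq_some hc) hs
  exact ⟨hb, hc⟩

lemma blockLift_blackburn (hPb : IsPDA Pb Z Sb) (hPc : ∀ i ∈ Sb, IsPDA (Pc i) e (S i))
    (hS : (Sb : Set ℕ).PairwiseDisjoint S) (j₁ : Fin (fb * n)) (k₁ : Fin (Kb * m))
    (j₂ : Fin (fb * n)) (k₂ : Fin (Kb * m)) (s : ℕ) (hne : (j₁, k₁) ≠ (j₂, k₂))
    (h₁ : blockLift Pb Pc j₁ k₁ = some s) (h₂ : blockLift Pb Pc j₂ k₂ = some s) :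
    blockLift Pb Pc j₁ k₂ = none ∧ blockLift Pb Pc j₂ k₁ = none := by
  obtain ⟨⟨J₁, x₁⟩, rfl⟩ := blockEquiv.symm.surjective j₁
  obtain ⟨⟨J₂, x₂⟩, rfl⟩ := blockEquiv.symm.surjective j₂
  obtain ⟨⟨K₁, y₁⟩, rfl⟩ := blockEquiv.symm.surjective k₁
  obtain ⟨⟨K₂, y₂⟩, rfl⟩ := blockEquiv.symm.surjective k₂
  rw [blockLift_blockEquiv_symm, Option.bind_eq_some_iff] at h₁
  obtain ⟨i, hb₁, hc₁⟩ := h₁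
  have hi := hPb.mem_of_eq_some hb₁
  rw [blockLift_blockEquiv_symm_eq_some_iff hPb hPc hS hi ((hPc i hi).mem_of_eq_some hc₁)] at h₂
  obtain ⟨hb₂, hc₂⟩ := h₂
  simp only [blockLift_blockEquiv_symm]
  by_cases hblk : (J₁, K₁) = (J₂, K₂)
  · obtain ⟨rfl, rfl⟩ := Prod.mk.inj hblk
    have hin : (x₁, y₁) ≠ (x₂, y₂) := by
      rintro ⟨⟩
      exact hne rfl
    obtain ⟨h₁₂, h₂₁⟩ := (hPc i hi).2.2.2 x₁ y₁ x₂ y₂ s hin hc₁ hc₂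
    simp [hb₁, h₁₂, h₂₁]
  · obtain ⟨h₁₂, h₂₁⟩ := hPb.2.2.2 J₁ K₁ J₂ K₂ i hblk hb₁ hb₂
    simp [h₁₂, h₂₁]

lemma IsPDA.blockLift (hPb : IsPDA Pb Z Sb) (hPc : ∀ i ∈ Sb, IsPDA (Pc i) e (S i))
    (hS : (Sb : Set ℕ).PairwiseDisjoint S) :
    IsPDA (blockLift Pb Pc) (Z * n + (fb - Z) * e) (Sb.biUnion S) := by
  refine ⟨colStars_blockLift hPb.1 fun J K i h => (hPc i (hPb.mem_of_eq_some h)).1,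
    fun s hs => ?_, fun j k s h => ?_, blockLift_blackburn hPb hPc hS⟩
  · obtain ⟨i, hi, hsi⟩ := mem_biUnion.1 hs
    obtain ⟨J, K, hb⟩ := hPb.2.1 i hi
    obtain ⟨x, y, hc⟩ := (hPc i hi).2.1 s hsi
    exact ⟨blockEquiv.symm (J, x), blockEquiv.symm (K, y),
      (blockLift_blockEquiv_symm_eq_some_iff hPb hPc hS hi hsi J x K y).2 ⟨hb, hc⟩⟩
  · obtain ⟨⟨J, x⟩, rfl⟩ := blockEquiv.symm.surjective j
    obtain ⟨⟨K, y⟩, rfl⟩ := blockEquiv.symm.surjective k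
    rw [blockLift_blockEquiv_symm, Option.bind_eq_some_iff] at h
    obtain ⟨i, hb, hc⟩ := h
    have hi := hPb.mem_of_eq_some hb
    exact mem_biUnion.2 ⟨i, hi, (hPc i hi).mem_of_eq_some hc⟩

lemma IsRegularPDA.blockLift {gb gc : ℕ} (hPb : IsPDA Pb Z Sb) (hregb : IsRegularPDA Pb Sb gb)
    (hPc : ∀ i ∈ Sb, IsPDA (Pc i) e (S i)) (hregc : ∀ i ∈ Sb, IsRegularPDA (Pc i) (S i) gc)
    (hS : (Sb : Set ℕ).PairwiseDisjoint S) :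
    IsRegularPDA (blockLift Pb Pc) (Sb.biUnion S) (gb * gc) := by
  intro s hs
  obtain ⟨i, hi, hsi⟩ := mem_biUnion.1 hs
  let E := (blockEquiv.prodCongr blockEquiv).trans
    (Equiv.prodProdProdComm (Fin fb) (Fin n) (Fin Kb) (Fin m))
  calc #{jk : Fin (fb * n) × Fin (Kb * m) | _root_.blockLift Pb Pc jk.1 jk.2 = some s}
      = #(({JK | Pb JK.1 JK.2 = some i} : Finset (Fin fb × Fin Kb)) ×ˢ
          ({xy | Pc i xy.1 xy.2 = some s} : Finset (Fin n × Fin m))) := by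
        refine (card_equiv E.symm fun q => ?_).symm
        simpa [E] using (blockLift_blockEquiv_symm_eq_some_iff hPb hPc hS hi hsi
          q.1.1 q.2.1 q.1.2 q.2.2).symm
    _ = gb * gc := by rw [card_product, hregb i hi, hregc i hi s hsi]

end BlockLift

/-- **Regular basic lifting.** Lifting a `g_b`-regular
`(K_b, f_b, Z_b, K_b(f_b−Z_b)/g_b)` PDA by integer-disjoint copies (via relabelings `φ i`)
of a `g_c`-regular `(m, n, e, m(n−e)/g_c)` PDA, with all-`∗` blocks replacing stars, yields
a `g_b·g_c`-regular
`(K_b m, f_b n, Z_b n + (f_b−Z_b)e, (K_b(f_b−Z_b)/g_b)·(m(n−e)/g_c))` PDA. -/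
theorem stmt_7 {Kb fb m n Zb e gb gc : ℕ} (Sb Sl : Finset ℕ)
    (Pb : Fin fb → Fin Kb → Option ℕ)
    (hPb : IsPDA Pb Zb Sb) (hregb : IsRegularPDA Pb Sb gb)
    (hcardb : Sb.card = Kb * (fb - Zb) / gb)
    (Pl : Fin n → Fin m → Option ℕ)
    (hPl : IsPDA Pl e Sl) (hregl : IsRegularPDA Pl Sl gc)
    (hcardl : Sl.card = m * (n - e) / gc)
    (φ : ℕ → ℕ → ℕ)
    (hinj : ∀ i ∈ Sb, Set.InjOn (φ i) ↑Sl)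
    (hdisj : ∀ i ∈ Sb, ∀ i' ∈ Sb, i ≠ i' →
      Disjoint (Sl.image (φ i)) (Sl.image (φ i'))) :
    IsPDA (blockLift Pb fun i a b => (Pl a b).map (φ i))
        (Zb * n + (fb - Zb) * e) (Sb.biUnion fun i => Sl.image (φ i)) ∧
    IsRegularPDA (blockLift Pb fun i a b => (Pl a b).map (φ i))
        (Sb.biUnion fun i => Sl.image (φ i)) (gb * gc) ∧
    (Sb.biUnion fun i => Sl.image (φ i)).card =
      (Kb * (fb - Zb) / gb) * (m * (n - e) / gc) := by
  have hcopies : ∀ i ∈ Sb, IsPDA (fun a b => (Pl a b).map (φ i)) e (Sl.image (φ i)) :=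
    fun i hi => hPl.map (hinj i hi)
  have hregcopies :
      ∀ i ∈ Sb, IsRegularPDA (fun a b => (Pl a b).map (φ i)) (Sl.image (φ i)) gc :=
    fun i hi => hregl.map hPl (hinj i hi)
  refine ⟨hPb.blockLift hcopies hdisj, hregb.blockLift hPb hcopies hregcopies hdisj, ?_⟩
  rw [card_biUnion hdisj, sum_congr rfl fun i hi => card_image_of_injOn (hinj i hi), sum_const,
    smul_eq_mul, hcardb, hcardl]
end

section
/- (Equivalence between Blackburn compatibility and lifting) Let P_*, P_0, …, P_{g−1} be n×n PDAs, and let P_*^{(i,j)} for i ≠ j be copies of P_* whose integer sets are pairwise disjoint and disjoint from the integers of all P_k. Form the gn×gn block array L with P_i as the i-th diagonal block and P_*^{(i,j)} as the (i,j) off-diagonal block. Then L is a valid PDA if and only if {P_0, …, P_{g−1}} is pairwise Blackburn-compatible with respect to P_*. -/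
open Finset

/-!
Two equal integers of the lifted array `L` lie, by disjointness of the relabelings, either both
in diagonal blocks or both in the same off-diagonal block `(i, j)`. In the latter case
injectivity of `φ i j` reduces the Blackburn condition to that of `P_*`; in the former the
entries lie in one `P_i` (its own Blackburn property) or in `P_i`, `P_i'` with `i ≠ i'`, and then
the entries of `L` that must be stars are the entries of `P_*` named in Blackburn
compatibility. Reading the same correspondence backwards gives the converse.
-/

section BlockIndex

variable {a b : ℕ}

@[simp]
theorem blkIdx_finProdFinEquiv (p : Fin a × Fin b) : blkIdx (finProdFinEquiv p) = p.1 :=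
  congrArg Prod.fst (finProdFinEquiv.symm_apply_apply p)

@[simp]
theorem inIdx_finProdFinEquiv (p : Fin a × Fin b) : inIdx (finProdFinEquiv p) = p.2 :=
  congrArg Prod.snd (finProdFinEquiv.symm_apply_apply p)

end BlockIndex

/-- The Blackburn clause of `IsPDA`, for arbitrary row and column types so that it can be
transported along reindexings. -/
def IsBlackburn {α β : Type*} (Q : α → β → Option ℕ) : Prop :=
  ∀ x₁ y₁ x₂ y₂ s, (x₁, y₁) ≠ (x₂, y₂) →
    Q x₁ y₁ = some s → Q x₂ y₂ = some s → Q x₁ y₂ = none ∧ Q x₂ y₁ = none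

theorem IsBlackburn.comp {α β α' β' : Type*} {Q : α → β → Option ℕ} (hQ : IsBlackburn Q)
    {e : α' → α} {f : β' → β} (he : e.Injective) (hf : f.Injective) :
    IsBlackburn fun x y => Q (e x) (f y) := by
  intro x₁ y₁ x₂ y₂ s hne h₁ h₂
  refine hQ _ _ _ _ s (fun h => hne ?_) h₁ h₂
  simp only [Prod.mk.injEq] at h ⊢
  exact ⟨he h.1, hf h.2⟩

theorem isBlackburn_comp_equiv_iff {α β α' β' : Type*} (Q : α → β → Option ℕ)
    (e : α' ≃ α) (f : β' ≃ β) :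
    IsBlackburn (fun x y => Q (e x) (f y)) ↔ IsBlackburn Q := by
  refine ⟨fun h => ?_, fun h => h.comp e.injective f.injective⟩
  simpa using h.comp e.symm.injective f.symm.injective

section BlockArray

variable {g n : ℕ}

def blockArray (B : Fin g → Fin g → Fin n → Fin n → Option ℕ) (x y : Fin (g * n)) :
    Option ℕ :=
  B (blkIdx x) (blkIdx y) (inIdx x) (inIdx y)

variable (B : Fin g → Fin g → Fin n → Fin n → Option ℕ)

@[simp]
theorem blockArray_finProdFinEquiv (p q : Fin g × Fin n) :
    blockArray B (finProdFinEquiv p) (finProdFinEquiv q) = B p.1 q.1 p.2 q.2 := by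
  simp [blockArray]

theorem colStars_blockArray (y : Fin (g * n)) :
    colStars (blockArray B) y = ∑ i, colStars (B i (blkIdx y)) (inIdx y) := by
  simp only [colStars, card_filter]
  rw [← finProdFinEquiv.sum_comp, Fintype.sum_prod_type]
  simp [blockArray]

theorem isBlackburn_blockArray_iff :
    IsBlackburn (blockArray B) ↔
      IsBlackburn fun p q : Fin g × Fin n => B p.1 q.1 p.2 q.2 := by
  rw [← isBlackburn_comp_equiv_iff _ finProdFinEquiv finProdFinEquiv]
  simp only [blockArray_finProdFinEquiv]

end BlockArray

theorem Finset.sum_ite_eq_add_mul {ι : Type*} [Fintype ι] [DecidableEq ι] (j : ι) (c d : ℕ) :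
    ∑ i, (if i = j then c else d) = c + (Fintype.card ι - 1) * d := by
  rw [← add_sum_erase _ _ (mem_univ j), if_pos rfl,
    sum_congr rfl fun i hi => if_neg (ne_of_mem_erase hi), sum_const,
    card_erase_of_mem (mem_univ j), card_univ, smul_eq_mul]

def liftSymbols {g : ℕ} (Sc : Fin g → Finset ℕ) (Ss : Finset ℕ) (φ : Fin g → Fin g → ℕ → ℕ) :
    Finset ℕ :=
  univ.biUnion Sc ∪
    (univ.filter fun p : Fin g × Fin g => p.1 ≠ p.2).biUnion fun p => Ss.image (φ p.1 p.2)

section Lift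

variable {g n : ℕ} (P : Fin g → Fin n → Fin n → Option ℕ) (Pstar : Fin n → Fin n → Option ℕ)
  (φ : Fin g → Fin g → ℕ → ℕ)

/-- The `(i, j)` block of the lifted array; `blockArray (liftBlock P Pstar φ)` unfolds to the
array `L` of `stmt_8`. -/
def liftBlock (i j : Fin g) (a b : Fin n) : Option ℕ :=
  if i = j then P i a b else (Pstar a b).map (φ i j)

@[simp]
theorem liftBlock_self (i : Fin g) : liftBlock P Pstar φ i i = P i := by
  funext a b
  simp [liftBlock]

variable {P Pstar φ}

theorem liftBlock_of_ne {i j : Fin g} (h : i ≠ j) (a b : Fin n) :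
    liftBlock P Pstar φ i j a b = (Pstar a b).map (φ i j) :=
  if_neg h

theorem liftBlock_of_ne_eq_none_iff {i j : Fin g} (h : i ≠ j) {a b : Fin n} :
    liftBlock P Pstar φ i j a b = none ↔ Pstar a b = none := by
  rw [liftBlock_of_ne h, Option.map_eq_none_iff]

theorem colStars_blockArray_liftBlock {Zc Zs : ℕ} (hP : ∀ i k, colStars (P i) k = Zc)
    (hstar : ∀ k, colStars Pstar k = Zs) (y : Fin (g * n)) :
    colStars (blockArray (liftBlock P Pstar φ)) y = Zc + (g - 1) * Zs := by
  have hblock : ∀ i, colStars (liftBlock P Pstar φ i (blkIdx y)) (inIdx y) =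
      if i = blkIdx y then Zc else Zs := by
    intro i
    split_ifs with h
    · rw [h, liftBlock_self, hP]
    · simp only [colStars, liftBlock_of_ne_eq_none_iff h]
      exact hstar _
  rw [colStars_blockArray, sum_congr rfl fun i _ => hblock i, sum_ite_eq_add_mul,
    Fintype.card_fin]

theorem BBCompat.of_isBlackburn_blockArray_liftBlock
    (h : IsBlackburn (blockArray (liftBlock P Pstar φ))) {i i' : Fin g} (hii : i ≠ i') :
    BBCompat (P i) (P i') Pstar := by
  rw [isBlackburn_blockArray_iff] at h
  intro a b a' b' s h₁ h₂
  have hne : ((i, a), (i, b)) ≠ ((i', a'), (i', b')) := by simp [hii]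
  obtain ⟨e₁, e₂⟩ := h _ _ _ _ s hne (by simpa using h₁) (by simpa using h₂)
  exact ⟨(liftBlock_of_ne_eq_none_iff hii).1 e₁, (liftBlock_of_ne_eq_none_iff hii.symm).1 e₂⟩

theorem liftBlock_blackburn_diag (hP : ∀ i, IsBlackburn (P i))
    (hC : ∀ i i' : Fin g, i ≠ i' → BBCompat (P i) (P i') Pstar) {i i' : Fin g}
    {a b a' b' : Fin n} {s : ℕ} (hne : ((i, a), (i, b)) ≠ ((i', a'), (i', b')))
    (h₁ : P i a b = some s) (h₂ : P i' a' b' = some s) :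
    liftBlock P Pstar φ i i' a b' = none ∧ liftBlock P Pstar φ i' i a' b = none := by
  by_cases hii : i = i'
  · subst hii
    simp only [liftBlock_self]
    exact hP i _ _ _ _ s (by simpa using hne) h₁ h₂
  · obtain ⟨e₁, e₂⟩ := hC i i' hii _ _ _ _ s h₁ h₂
    exact ⟨(liftBlock_of_ne_eq_none_iff hii).2 e₁, (liftBlock_of_ne_eq_none_iff (Ne.symm hii)).2 e₂⟩

variable {Sc : Fin g → Finset ℕ} {Ss : Finset ℕ}

theorem mem_image_of_liftBlock_eq_some (hSs : ∀ a b t, Pstar a b = some t → t ∈ Ss)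
    {i j : Fin g} (h : i ≠ j) {a b : Fin n} {s : ℕ} (hs : liftBlock P Pstar φ i j a b = some s) :
    s ∈ Ss.image (φ i j) := by
  rw [liftBlock_of_ne h, Option.map_eq_some_iff] at hs
  obtain ⟨t, ht, rfl⟩ := hs
  exact mem_image_of_mem _ (hSs _ _ _ ht)

theorem liftBlock_blackburn_offDiag (hstar : IsBlackburn Pstar)
    (hSs : ∀ a b t, Pstar a b = some t → t ∈ Ss) (hinj : ∀ i j, Set.InjOn (φ i j) ↑Ss)
    (hφdisj : ∀ i j i' j' : Fin g, (i, j) ≠ (i', j') →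
      Disjoint (Ss.image (φ i j)) (Ss.image (φ i' j')))
    {i j i' j' : Fin g} (hij : i ≠ j) (hij' : i' ≠ j') {a b a' b' : Fin n} {s : ℕ}
    (hne : ((i, a), (j, b)) ≠ ((i', a'), (j', b')))
    (h₁ : liftBlock P Pstar φ i j a b = some s) (h₂ : liftBlock P Pstar φ i' j' a' b' = some s) :
    liftBlock P Pstar φ i j' a b' = none ∧ liftBlock P Pstar φ i' j a' b = none := by
  have hblock : (i, j) = (i', j') := by
    by_contra hblock
    exact disjoint_left.1 (hφdisj _ _ _ _ hblock) (mem_image_of_liftBlock_eq_some hSs hij h₁)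
      (mem_image_of_liftBlock_eq_some hSs hij' h₂)
  obtain ⟨rfl, rfl⟩ := Prod.mk.inj hblock
  rw [liftBlock_of_ne hij, Option.map_eq_some_iff] at h₁ h₂
  obtain ⟨t, ht, rfl⟩ := h₁
  obtain ⟨t', ht', hφ⟩ := h₂
  obtain rfl : t' = t := hinj i j (hSs _ _ _ ht') (hSs _ _ _ ht) hφ
  obtain ⟨e₁, e₂⟩ := hstar _ _ _ _ t' (by simpa using hne) ht ht'
  exact ⟨(liftBlock_of_ne_eq_none_iff hij).2 e₁, (liftBlock_of_ne_eq_none_iff hij).2 e₂⟩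

theorem liftBlock_diag_ne_offDiag (hSc : ∀ k a b s, P k a b = some s → s ∈ Sc k)
    (hSs : ∀ a b t, Pstar a b = some t → t ∈ Ss)
    (hφP : ∀ i j k, Disjoint (Ss.image (φ i j)) (Sc k)) {i j k : Fin g} (hij : i ≠ j)
    {a b a' b' : Fin n} {s : ℕ} (h₁ : P k a b = some s)
    (h₂ : liftBlock P Pstar φ i j a' b' = some s) : False :=
  disjoint_left.1 (hφP i j k) (mem_image_of_liftBlock_eq_some hSs hij h₂) (hSc k _ _ _ h₁)

theorem isBlackburn_liftBlock {Zc Zs : ℕ} (hP : ∀ i, IsPDA (P i) Zc (Sc i))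
    (hstar : IsPDA Pstar Zs Ss) (hinj : ∀ i j, Set.InjOn (φ i j) ↑Ss)
    (hφdisj : ∀ i j i' j' : Fin g, (i, j) ≠ (i', j') →
      Disjoint (Ss.image (φ i j)) (Ss.image (φ i' j')))
    (hφP : ∀ i j k, Disjoint (Ss.image (φ i j)) (Sc k))
    (hC : ∀ i i' : Fin g, i ≠ i' → BBCompat (P i) (P i') Pstar) :
    IsBlackburn fun p q : Fin g × Fin n => liftBlock P Pstar φ p.1 q.1 p.2 q.2 := by
  have hSc : ∀ k a b s, P k a b = some s → s ∈ Sc k := fun k => (hP k).2.2.1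
  rintro ⟨i, a⟩ ⟨j, b⟩ ⟨i', a'⟩ ⟨j', b'⟩ s hne h₁ h₂
  dsimp only at h₁ h₂ ⊢
  rcases eq_or_ne i j with rfl | hij <;> rcases eq_or_ne i' j' with rfl | hij'
  · rw [liftBlock_self] at h₁ h₂
    exact liftBlock_blackburn_diag (fun k => (hP k).2.2.2) hC hne h₁ h₂
  · rw [liftBlock_self] at h₁
    exact (liftBlock_diag_ne_offDiag hSc hstar.2.2.1 hφP hij' h₁ h₂).elim
  · rw [liftBlock_self] at h₂
    exact (liftBlock_diag_ne_offDiag hSc hstar.2.2.1 hφP hij h₂ h₁).elim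
  · exact liftBlock_blackburn_offDiag hstar.2.2.2 hstar.2.2.1 hinj hφdisj hij hij' hne h₁ h₂

theorem mem_liftSymbols_of_liftBlock_eq_some (hSc : ∀ k a b s, P k a b = some s → s ∈ Sc k)
    (hSs : ∀ a b t, Pstar a b = some t → t ∈ Ss) {i j : Fin g} {a b : Fin n} {s : ℕ}
    (h : liftBlock P Pstar φ i j a b = some s) : s ∈ liftSymbols Sc Ss φ := by
  rcases eq_or_ne i j with rfl | hij
  · rw [liftBlock_self] at h
    exact mem_union_left _ (mem_biUnion.2 ⟨i, mem_univ _, hSc i _ _ _ h⟩)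
  · exact mem_union_right _ (mem_biUnion.2
      ⟨(i, j), mem_filter.2 ⟨mem_univ _, hij⟩, mem_image_of_liftBlock_eq_some hSs hij h⟩)

theorem exists_liftBlock_eq_some (hSc : ∀ k, ∀ s ∈ Sc k, ∃ a b, P k a b = some s)
    (hSs : ∀ t ∈ Ss, ∃ a b, Pstar a b = some t) {s : ℕ} (hs : s ∈ liftSymbols Sc Ss φ) :
    ∃ i j a b, liftBlock P Pstar φ i j a b = some s := by
  rcases mem_union.1 hs with hs | hs
  · obtain ⟨k, -, hk⟩ := mem_biUnion.1 hs
    obtain ⟨a, b, hab⟩ := hSc k s hk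
    exact ⟨k, k, a, b, by rwa [liftBlock_self]⟩
  · obtain ⟨⟨i, j⟩, hij, hs⟩ := mem_biUnion.1 hs
    obtain ⟨t, ht, rfl⟩ := mem_image.1 hs
    obtain ⟨a, b, hab⟩ := hSs t ht
    exact ⟨i, j, a, b, by rw [liftBlock_of_ne (mem_filter.1 hij).2, hab, Option.map_some]⟩

theorem isPDA_blockArray_liftBlock {Zc Zs : ℕ} (hP : ∀ i, IsPDA (P i) Zc (Sc i))
    (hstar : IsPDA Pstar Zs Ss) (hinj : ∀ i j, Set.InjOn (φ i j) ↑Ss)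
    (hφdisj : ∀ i j i' j' : Fin g, (i, j) ≠ (i', j') →
      Disjoint (Ss.image (φ i j)) (Ss.image (φ i' j')))
    (hφP : ∀ i j k, Disjoint (Ss.image (φ i j)) (Sc k))
    (hC : ∀ i i' : Fin g, i ≠ i' → BBCompat (P i) (P i') Pstar) :
    IsPDA (blockArray (liftBlock P Pstar φ)) (Zc + (g - 1) * Zs) (liftSymbols Sc Ss φ) := by
  refine ⟨colStars_blockArray_liftBlock (fun i => (hP i).1) hstar.1, fun s hs => ?_,
    fun x y s h => mem_liftSymbols_of_liftBlock_eq_some (fun k => (hP k).2.2.1) hstar.2.2.1 h,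
    (isBlackburn_blockArray_iff _).2 (isBlackburn_liftBlock hP hstar hinj hφdisj hφP hC)⟩
  obtain ⟨i, j, a, b, h⟩ := exists_liftBlock_eq_some (fun k => (hP k).2.1) hstar.2.1 hs
  exact ⟨finProdFinEquiv (i, a), finProdFinEquiv (j, b), by simpa using h⟩

end Lift

/-- **Equivalence between Blackburn compatibility and lifting.**
Let `P 0, …, P (g−1)` be `(n, n, Zc, Sc i)` PDAs and `Pstar` an `(n, n, Zs, Ss)` PDA, and
let the `(i,j)` off-diagonal blocks of the `gn × gn` block array `L` be integer-disjoint
copies of `Pstar` (relabeled by `φ i j`, with all copy integer sets pairwise disjoint and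
disjoint from the `Sc k`), while the `i`-th diagonal block is `P i`. Then `L` is a valid
PDA (with `Zc + (g−1)Zs` stars per column and the union of all integer sets) if and only
if `{P 0, …, P (g−1)}` is pairwise Blackburn-compatible with respect to `Pstar`. -/
theorem stmt_8 {n g Zc Zs : ℕ} (Sc : Fin g → Finset ℕ) (Ss : Finset ℕ)
    (P : Fin g → Fin n → Fin n → Option ℕ)
    (Pstar : Fin n → Fin n → Option ℕ)
    (hP : ∀ i, IsPDA (P i) Zc (Sc i))
    (hstar : IsPDA Pstar Zs Ss)
    (φ : Fin g → Fin g → ℕ → ℕ)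
    (hinj : ∀ i j, Set.InjOn (φ i j) ↑Ss)
    (hφdisj : ∀ i j i' j' : Fin g, (i, j) ≠ (i', j') →
      Disjoint (Ss.image (φ i j)) (Ss.image (φ i' j')))
    (hφP : ∀ i j k, Disjoint (Ss.image (φ i j)) (Sc k)) :
    IsPDA
      (fun x y : Fin (g * n) =>
        if blkIdx x = blkIdx y then P (blkIdx x) (inIdx x) (inIdx y)
        else (Pstar (inIdx x) (inIdx y)).map (φ (blkIdx x) (blkIdx y)))
      (Zc + (g - 1) * Zs)
      ((Finset.univ.biUnion Sc) ∪
        (((Finset.univ : Finset (Fin g × Fin g)).filter fun p => p.1 ≠ p.2).biUnion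
          fun p => Ss.image (φ p.1 p.2)))
    ↔ (∀ i i' : Fin g, i ≠ i' → BBCompat (P i) (P i') Pstar) :=
  ⟨fun hL _ _ hii => BBCompat.of_isBlackburn_blockArray_liftBlock hL.2.2.2 hii,
    isPDA_blockArray_liftBlock hP hstar hinj hφdisj hφP⟩
end
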